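/- Let q ≥ 1, n > 2q + 4, 1 ≤ ℓ ≤ q, and let y_1,…,y_n ∈ ℝ^ℓ. Set w_{ij} = exp(-‖y_i - y_j‖²) and, for z_1,…,z_n ∈ ℝ^q, let S_Z have entries s_{ij} = -‖z_i - z_j‖². Then the embedding Z* defined by z*_i = (y_i, 0, …, 0) ∈ ℝ^q (y_i padded with q-ℓ zeros) attains the entropic lower bound, L_W(S_{Z*}) = H(W), and every embedding Z with L_W(S_Z) = H(W) differs from Z* by a Euclidean isometry: there is an isometry f of ℝ^q with z_i = f(z*_i) for all i. -/

import Mathlib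

open scoped BigOperators

/-- The weighted InfoNCE loss. -/
noncomputable def infoNCE {n : ℕ} (W S : Matrix (Fin n) (Fin n) ℝ) : ℝ :=
  -(1 / (n : ℝ)) * ∑ i : Fin n, ∑ j ∈ Finset.univ.erase i,
    (W i j / ∑ k ∈ Finset.univ.erase i, W i k) *
      Real.log (Real.exp (S i j) / ∑ k ∈ Finset.univ.erase i, Real.exp (S i k))

/-- The entropic lower bound (with the convention `0 * log 0 = 0`,
which holds automatically since `Real.log 0 = 0`). -/
noncomputable def entropicBound {n : ℕ} (W : Matrix (Fin n) (Fin n) ℝ) : ℝ :=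
  -(1 / (n : ℝ)) * ∑ i : Fin n, ∑ j ∈ Finset.univ.erase i,
    (W i j / ∑ k ∈ Finset.univ.erase i, W i k) *
      Real.log (W i j / ∑ k ∈ Finset.univ.erase i, W i k)


/-- Latent similarity matrix `s_{ij} = -‖z_i - z_j‖²`. -/
noncomputable def SEucl {n q : ℕ} (z : Fin n → EuclideanSpace ℝ (Fin q)) :
    Matrix (Fin n) (Fin n) ℝ :=
  Matrix.of fun i j => -‖z i - z j‖ ^ 2

/-- Label-based weights `w_{ij} = exp(-‖y_i - y_j‖²)`. -/
noncomputable def Wlabel {n l : ℕ} (y : Fin n → EuclideanSpace ℝ (Fin l)) :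
    Matrix (Fin n) (Fin n) ℝ :=
  Matrix.of fun i j => Real.exp (-‖y i - y j‖ ^ 2)

/-- Padding of a vector of `ℝ^l` with `q - l` zeros, giving a vector of `ℝ^q`. -/
noncomputable def pad (l q : ℕ) (y : EuclideanSpace ℝ (Fin l)) : EuclideanSpace ℝ (Fin q) :=
  (WithLp.equiv 2 (Fin q → ℝ)).symm fun j =>
    if h : (j : ℕ) < l then (WithLp.equiv 2 (Fin l → ℝ)) y ⟨(j : ℕ), h⟩ else 0


/-!
At a minimiser, the equality case of Gibbs' inequality forces every softmax row of `S_Z` to equal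
the corresponding row of normalised weights, so `‖z_i - z_j‖² = ‖y_i - y_j‖² + c_i` for `i ≠ j`,
and symmetry makes `c_i` a single constant `c`. If `c > 0`, the Gram matrix of the `n - 1` vectors
`z_i - z_{i₀}` is that of the `y_i - y_{i₀}` plus `(c/2)(J + I)`, hence positive definite, which is
impossible for `n - 1 > q` vectors of `ℝ^q`; `c < 0` is symmetric. So `Z` and `Z*` are congruent,
and a congruence of finitely many points of a Euclidean space comes from an isometry: the Gram
matrices of the difference vectors agree, which defines a linear isometry on their span.
-/

open Real Matrix Finset
open scoped RealInnerProductSpace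

section Gibbs

lemma mul_log_le_mul_log_add_sub {p q : ℝ} (hp : 0 < p) (hq : 0 < q) :
    q * log p ≤ q * log q + (p - q) := by
  have h := mul_le_mul_of_nonneg_left (log_le_sub_one_of_pos (div_pos hp hq)) hq.le
  rw [log_div hp.ne' hq.ne', mul_sub_one, mul_div_cancel₀ _ hq.ne'] at h
  linarith

lemma mul_log_lt_mul_log_add_sub {p q : ℝ} (hp : 0 < p) (hq : 0 < q) (hpq : p ≠ q) :
    q * log p < q * log q + (p - q) := by
  have hne : p / q ≠ 1 := fun h => hpq ((div_eq_one_iff_eq hq.ne').1 h)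
  have h := mul_lt_mul_of_pos_left (log_lt_sub_one_of_pos (div_pos hp hq) hne) hq
  rw [log_div hp.ne' hq.ne', mul_sub_one, mul_div_cancel₀ _ hq.ne'] at h
  linarith

variable {ι : Type*} {s : Finset ι} {p q : ι → ℝ}

theorem sum_mul_log_le_sum_mul_log (hp : ∀ j ∈ s, 0 < p j) (hq : ∀ j ∈ s, 0 < q j)
    (hsum : ∑ j ∈ s, p j = ∑ j ∈ s, q j) :
    ∑ j ∈ s, q j * log (p j) ≤ ∑ j ∈ s, q j * log (q j) := by
  calc ∑ j ∈ s, q j * log (p j) ≤ ∑ j ∈ s, (q j * log (q j) + (p j - q j)) :=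
        sum_le_sum fun j hj => mul_log_le_mul_log_add_sub (hp j hj) (hq j hj)
    _ = ∑ j ∈ s, q j * log (q j) := by rw [sum_add_distrib, sum_sub_distrib, hsum, sub_self,
        add_zero]

theorem eq_of_sum_mul_log_eq (hp : ∀ j ∈ s, 0 < p j) (hq : ∀ j ∈ s, 0 < q j)
    (hsum : ∑ j ∈ s, p j = ∑ j ∈ s, q j)
    (heq : ∑ j ∈ s, q j * log (p j) = ∑ j ∈ s, q j * log (q j)) :
    ∀ j ∈ s, p j = q j := by
  by_contra! ⟨j, hj, hpq⟩
  have hlt : ∑ j ∈ s, q j * log (p j) < ∑ j ∈ s, (q j * log (q j) + (p j - q j)) :=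
    sum_lt_sum (fun j hj => mul_log_le_mul_log_add_sub (hp j hj) (hq j hj))
      ⟨j, hj, mul_log_lt_mul_log_add_sub (hp j hj) (hq j hj) hpq⟩
  rw [sum_add_distrib, sum_sub_distrib, hsum, sub_self, add_zero] at hlt
  exact hlt.ne heq

end Gibbs

section RowNormalize

variable {n : ℕ}

noncomputable def rowNormalize (A : Matrix (Fin n) (Fin n) ℝ) : Matrix (Fin n) (Fin n) ℝ :=
  Matrix.of fun i j => A i j / ∑ k ∈ univ.erase i, A i k

lemma infoNCE_eq_rowNormalize (W S : Matrix (Fin n) (Fin n) ℝ) :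
    infoNCE W S = -(1 / (n : ℝ)) * ∑ i, ∑ j ∈ univ.erase i,
      rowNormalize W i j * log (rowNormalize (S.map exp) i j) := rfl

lemma entropicBound_eq_rowNormalize (W : Matrix (Fin n) (Fin n) ℝ) :
    entropicBound W = -(1 / (n : ℝ)) * ∑ i, ∑ j ∈ univ.erase i,
      rowNormalize W i j * log (rowNormalize W i j) := rfl

variable {A : Matrix (Fin n) (Fin n) ℝ}

lemma rowSum_erase_pos (hn : 1 < n) (hA : ∀ i j, i ≠ j → 0 < A i j) (i : Fin n) :
    0 < ∑ k ∈ univ.erase i, A i k := by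
  obtain ⟨j, hj⟩ := Fintype.exists_ne_of_one_lt_card (by rwa [Fintype.card_fin]) i
  exact sum_pos (fun k hk => hA i k (ne_of_mem_erase hk).symm) ⟨j, mem_erase.2 ⟨hj, mem_univ j⟩⟩

lemma rowNormalize_pos (hn : 1 < n) (hA : ∀ i j, i ≠ j → 0 < A i j) {i j : Fin n}
    (hij : i ≠ j) : 0 < rowNormalize A i j :=
  div_pos (hA i j hij) (rowSum_erase_pos hn hA i)

lemma sum_rowNormalize (hn : 1 < n) (hA : ∀ i j, i ≠ j → 0 < A i j) (i : Fin n) :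
    ∑ j ∈ univ.erase i, rowNormalize A i j = 1 := by
  simp only [rowNormalize, of_apply, ← sum_div, div_self (rowSum_erase_pos hn hA i).ne']

theorem infoNCE_eq_entropicBound_iff (hn : 1 < n) {W : Matrix (Fin n) (Fin n) ℝ}
    (hW : ∀ i j, i ≠ j → 0 < W i j) (S : Matrix (Fin n) (Fin n) ℝ) :
    infoNCE W S = entropicBound W ↔
      ∀ i j, i ≠ j → rowNormalize (S.map exp) i j = rowNormalize W i j := by
  have hS : ∀ i j, i ≠ j → 0 < S.map exp i j := fun i j _ => exp_pos _
  have hpos : ∀ (B : Matrix (Fin n) (Fin n) ℝ), (∀ i j, i ≠ j → 0 < B i j) →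
      ∀ i, ∀ j ∈ univ.erase i, 0 < rowNormalize B i j :=
    fun B hB i j hj => rowNormalize_pos hn hB (ne_of_mem_erase hj).symm
  have hsum : ∀ i, ∑ j ∈ univ.erase i, rowNormalize (S.map exp) i j
      = ∑ j ∈ univ.erase i, rowNormalize W i j := by
    intro i; rw [sum_rowNormalize hn hS, sum_rowNormalize hn hW]
  rw [infoNCE_eq_rowNormalize, entropicBound_eq_rowNormalize]
  constructor
  · intro h i j hij
    have hrows := (sum_eq_sum_iff_of_le fun i _ =>
      sum_mul_log_le_sum_mul_log (hpos _ hS i) (hpos _ hW i) (hsum i)).1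
      (mul_left_cancel₀ (neg_ne_zero.2 (one_div_ne_zero (Nat.cast_ne_zero.2 (by omega)))) h)
    exact eq_of_sum_mul_log_eq (hpos _ hS i) (hpos _ hW i) (hsum i) (hrows i (mem_univ i)) j
      (mem_erase.2 ⟨hij.symm, mem_univ j⟩)
  · intro h
    congr 1
    refine sum_congr rfl fun i _ => sum_congr rfl fun j hj => ?_
    rw [h i j (ne_of_mem_erase hj).symm]

/-- Softmax rows only see similarities up to a row constant; symmetry makes the constants agree. -/
theorem exists_add_const_of_rowNormalize_map_exp_eq (hn : 1 < n)
    {S T : Matrix (Fin n) (Fin n) ℝ} (hS : S.IsSymm) (hT : T.IsSymm)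
    (h : ∀ i j, i ≠ j → rowNormalize (S.map exp) i j = rowNormalize (T.map exp) i j) :
    ∃ c : ℝ, ∀ i j, i ≠ j → S i j = T i j + c := by
  obtain ⟨c, hrow⟩ : ∃ c : Fin n → ℝ, ∀ i j, i ≠ j → S i j = T i j + c i := by
    refine ⟨fun i => log ((∑ k ∈ univ.erase i, exp (S i k)) / ∑ k ∈ univ.erase i, exp (T i k)),
      fun i j hij => ?_⟩
    have hA : 0 < ∑ k ∈ univ.erase i, exp (S i k) :=
      rowSum_erase_pos hn (A := S.map exp) (fun _ _ _ => exp_pos _) i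
    have hB : 0 < ∑ k ∈ univ.erase i, exp (T i k) :=
      rowSum_erase_pos hn (A := T.map exp) (fun _ _ _ => exp_pos _) i
    have := congrArg log (h i j hij)
    simp only [rowNormalize, of_apply, map_apply] at this
    rw [log_div (exp_pos _).ne' hA.ne', log_div (exp_pos _).ne' hB.ne', log_exp, log_exp] at this
    dsimp only
    rw [log_div hA.ne' hB.ne']
    linarith
  have hc : ∀ i j, i ≠ j → c i = c j := fun i j hij => by
    have := hrow j i hij.symm
    rw [hS.apply i j, hT.apply i j] at this
    linarith [hrow i j hij]
  let i₀ : Fin n := ⟨0, by omega⟩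
  refine ⟨c i₀, fun i j hij => ?_⟩
  rw [hrow i j hij]
  rcases eq_or_ne i i₀ with rfl | hi
  · rfl
  · rw [hc i i₀ hi]

end RowNormalize

section Euclidean

variable {E : Type*} [NormedAddCommGroup E] [InnerProductSpace ℝ E]

lemma posDef_ones_add_one {ι : Type*} [Fintype ι] [DecidableEq ι] :
    (Matrix.of (fun _ _ => 1) + 1 : Matrix ι ι ℝ).PosDef := by
  have hJ : (Matrix.of (fun _ _ => 1) : Matrix ι ι ℝ) = vecMulVec 1 (star 1) := by
    ext i j; simp [vecMulVec_apply]
  rw [hJ]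
  exact PosDef.posSemidef_add (posSemidef_vecMulVec_self_star 1) PosDef.one

lemma real_inner_sub_sub_eq_norm_sq (a b o : E) :
    ⟪a - o, b - o⟫ = (‖a - o‖ ^ 2 + ‖b - o‖ ^ 2 - ‖a - b‖ ^ 2) / 2 := by
  rw [real_inner_eq_norm_mul_self_add_norm_mul_self_sub_norm_sub_mul_self_div_two,
    sub_sub_sub_cancel_right]
  ring

lemma gram_sub_eq_add_smul {ι : Type*} [DecidableEq ι] {x z : ι → E} {c : ℝ}
    (h : ∀ i j, i ≠ j → ‖z i - z j‖ ^ 2 = ‖x i - x j‖ ^ 2 + c) (i₀ : ι) :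
    gram ℝ (fun i : {i // i ≠ i₀} => z i - z i₀)
      = gram ℝ (fun i : {i // i ≠ i₀} => x i - x i₀)
        + (c / 2) • (Matrix.of (fun _ _ => 1) + 1) := by
  ext i j
  simp only [gram_apply, Matrix.add_apply, Matrix.smul_apply, of_apply, smul_eq_mul,
    real_inner_sub_sub_eq_norm_sq]
  rcases eq_or_ne i j with rfl | hij
  · simp only [sub_self, norm_zero, one_apply_eq, h i i₀ i.2]
    ring
  · rw [one_apply_ne hij, h i i₀ i.2, h j i₀ j.2, h i j (Subtype.coe_ne_coe.2 hij)]
    ring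

theorem nonpos_of_sq_norm_sub_eq_add [FiniteDimensional ℝ E] {ι : Type*} [Fintype ι]
    {x z : ι → E} {c : ℝ} (hcard : Module.finrank ℝ E + 1 < Fintype.card ι)
    (h : ∀ i j, i ≠ j → ‖z i - z j‖ ^ 2 = ‖x i - x j‖ ^ 2 + c) : c ≤ 0 := by
  classical
  by_contra! hc
  obtain ⟨i₀⟩ : Nonempty ι := Fintype.card_pos_iff.1 (by omega)
  have hpd : (gram ℝ (fun i : {i // i ≠ i₀} => z i - z i₀)).PosDef := by
    rw [gram_sub_eq_add_smul h i₀]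
    exact PosDef.posSemidef_add (posSemidef_gram ℝ _) (posDef_ones_add_one.smul (half_pos hc))
  have hle := (linearIndependent_of_posDef_gram hpd).fintype_card_le_finrank
  rw [Fintype.card_subtype_compl, Fintype.card_subtype_eq] at hle
  omega

theorem eq_zero_of_sq_norm_sub_eq_add [FiniteDimensional ℝ E] {ι : Type*} [Fintype ι]
    {x z : ι → E} {c : ℝ} (hcard : Module.finrank ℝ E + 1 < Fintype.card ι)
    (h : ∀ i j, i ≠ j → ‖z i - z j‖ ^ 2 = ‖x i - x j‖ ^ 2 + c) : c = 0 := by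
  have hneg : -c ≤ 0 := nonpos_of_sq_norm_sub_eq_add (x := z) (z := x) hcard fun i j hij => by
    rw [h i j hij]; ring
  linarith [nonpos_of_sq_norm_sub_eq_add hcard h]

theorem exists_linearIsometryEquiv_of_gram_eq [FiniteDimensional ℝ E] {ι : Type*} [Finite ι]
    {u v : ι → E} (h : gram ℝ u = gram ℝ v) : ∃ g : E ≃ₗᵢ[ℝ] E, ∀ i, g (u i) = v i := by
  classical
  have := Fintype.ofFinite ι
  set A := Fintype.linearCombination ℝ u
  set B := Fintype.linearCombination ℝ v
  have hnorm : ∀ c, ‖A c‖ = ‖B c‖ := by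
    intro c
    have := star_dotProduct_gram_mulVec (𝕜 := ℝ) u c c
    rw [h, star_dotProduct_gram_mulVec] at this
    rw [← sq_eq_sq₀ (norm_nonneg _) (norm_nonneg _), ← real_inner_self_eq_norm_sq,
      ← real_inner_self_eq_norm_sq, Fintype.linearCombination_apply,
      Fintype.linearCombination_apply, this]
  have hker : LinearMap.ker A ≤ LinearMap.ker B := fun c hc => by
    rw [LinearMap.mem_ker, ← norm_eq_zero, ← hnorm, norm_eq_zero]
    exact hc
  let T : LinearMap.range A →ₗ[ℝ] E :=
    (LinearMap.ker A).liftQ B hker ∘ₗ A.quotKerEquivRange.symm.toLinearMap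
  have hT : ∀ c, T ⟨A c, LinearMap.mem_range_self A c⟩ = B c := fun c => by
    simp [T, LinearMap.quotKerEquivRange_symm_apply_image]
  let L : LinearMap.range A →ₗᵢ[ℝ] E :=
    ⟨T, by rintro ⟨_, c, rfl⟩; rw [hT, ← hnorm]; rfl⟩
  have hext : ∀ c, L.extend (A c) = B c := fun c =>
    (L.extend_apply ⟨A c, LinearMap.mem_range_self A c⟩).trans (hT c)
  refine ⟨L.extend.toLinearIsometryEquiv rfl, fun i => ?_⟩
  simpa [A, B] using hext (Pi.single i 1)

theorem Congruent.exists_isometryEquiv [FiniteDimensional ℝ E] {ι : Type*} [Finite ι]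
    {x z : ι → E} (h : Congruent x z) : ∃ f : E ≃ᵢ E, ∀ i, f (x i) = z i := by
  rcases isEmpty_or_nonempty ι with hι | ⟨⟨i₀⟩⟩
  · exact ⟨IsometryEquiv.refl E, isEmptyElim⟩
  have hdist := congruent_iff_dist_eq.1 h
  have hgram : gram ℝ (fun i => x i - x i₀) = gram ℝ (fun i => z i - z i₀) := by
    ext i j
    simp only [gram_apply, real_inner_sub_sub_eq_norm_sq, ← dist_eq_norm, hdist]
  obtain ⟨g, hg⟩ := exists_linearIsometryEquiv_of_gram_eq hgram
  refine ⟨(IsometryEquiv.subRight (x i₀)).trans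
    (g.toIsometryEquiv.trans (IsometryEquiv.addRight (z i₀))), fun i => ?_⟩
  simp [hg]

end Euclidean

lemma pad_apply (l q : ℕ) (v : EuclideanSpace ℝ (Fin l)) (j : Fin q) :
    pad l q v j = if h : (j : ℕ) < l then v ⟨j, h⟩ else 0 := rfl

lemma pad_sub (l q : ℕ) (a b : EuclideanSpace ℝ (Fin l)) :
    pad l q a - pad l q b = pad l q (a - b) := by
  ext j
  simp only [PiLp.sub_apply, pad_apply]
  split_ifs <;> simp

lemma norm_pad {l q : ℕ} (hlq : l ≤ q) (v : EuclideanSpace ℝ (Fin l)) :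
    ‖pad l q v‖ = ‖v‖ := by
  rw [EuclideanSpace.norm_eq, EuclideanSpace.norm_eq,
    Fintype.sum_of_injective (Fin.castLE hlq) (Fin.castLE_injective hlq) _
      (fun j => ‖pad l q v j‖ ^ 2)]
  · rintro j hj
    rw [pad_apply, dif_neg fun h => hj ⟨⟨j, h⟩, rfl⟩, norm_zero, zero_pow two_ne_zero]
  · intro k
    simp [pad_apply]

theorem statement6_general {n q l : ℕ} (hn : 2 * q + 4 < n)
    (hlq : l ≤ q) (y : Fin n → EuclideanSpace ℝ (Fin l)) :
    infoNCE (Wlabel y) (SEucl fun i => pad l q (y i)) = entropicBound (Wlabel y) ∧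
    (∀ z : Fin n → EuclideanSpace ℝ (Fin q),
      infoNCE (Wlabel y) (SEucl z) = entropicBound (Wlabel y) →
      ∃ f : EuclideanSpace ℝ (Fin q) ≃ᵢ EuclideanSpace ℝ (Fin q),
        ∀ i : Fin n, z i = f (pad l q (y i))) := by
  have hn1 : 1 < n := by omega
  have hW : ∀ i j, i ≠ j → 0 < Wlabel y i j := fun _ _ _ => exp_pos _
  set x := fun i => pad l q (y i)
  have hWx : (SEucl x).map exp = Wlabel y := by
    ext i j
    simp [x, SEucl, Wlabel, pad_sub, norm_pad hlq]
  have hSymm : ∀ z : Fin n → EuclideanSpace ℝ (Fin q), (SEucl z).IsSymm :=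
    fun z => IsSymm.ext fun i j => by simp [SEucl, norm_sub_rev]
  refine ⟨(infoNCE_eq_entropicBound_iff hn1 hW _).2 fun i j _ => by rw [hWx], fun z hz => ?_⟩
  obtain ⟨c, hc⟩ := exists_add_const_of_rowNormalize_map_exp_eq hn1 (hSymm x) (hSymm z)
    fun i j hij => by rw [hWx, (infoNCE_eq_entropicBound_iff hn1 hW _).1 hz i j hij]
  have hsq : ∀ i j, i ≠ j → ‖z i - z j‖ ^ 2 = ‖x i - x j‖ ^ 2 + c := fun i j hij => by
    have := hc i j hij
    simp only [SEucl, of_apply] at this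
    linarith
  have hc0 : c = 0 := eq_zero_of_sq_norm_sub_eq_add
    (by rw [finrank_euclideanSpace_fin, Fintype.card_fin]; omega) hsq
  have hcong : Congruent x z := congruent_iff_dist_eq.2 fun i j => by
    rcases eq_or_ne i j with rfl | hij
    · simp
    · rw [dist_eq_norm, dist_eq_norm, ← sq_eq_sq₀ (norm_nonneg _) (norm_nonneg _), hsq i j hij,
        hc0, add_zero]
  obtain ⟨f, hf⟩ := hcong.exists_isometryEquiv
  exact ⟨f, fun i => (hf i).symm⟩

/-- Euclidean w-InfoNCE with continuous labels: the zero-padded labels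
attain the entropic lower bound, and any attaining embedding differs from them by a
Euclidean isometry. -/
theorem statement6 {n q l : ℕ} (hq : 1 ≤ q) (hn : 2 * q + 4 < n)
    (hl : 1 ≤ l) (hlq : l ≤ q) (y : Fin n → EuclideanSpace ℝ (Fin l)) :
    infoNCE (Wlabel y) (SEucl fun i => pad l q (y i)) = entropicBound (Wlabel y) ∧
    (∀ z : Fin n → EuclideanSpace ℝ (Fin q),
      infoNCE (Wlabel y) (SEucl z) = entropicBound (Wlabel y) →
      ∃ f : EuclideanSpace ℝ (Fin q) ≃ᵢ EuclideanSpace ℝ (Fin q),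
        ∀ i : Fin n, z i = f (pad l q (y i))) :=
  statement6_general hn hlq y
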